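/- Let ℂ : Sym₃ → Sym₃ be an elasticity tensor that is coercive with constant c > 0, and let Ā ∈ Sym₂. Define b^min ∈ ℝ³ by b^min_j := −(𝕔⁻¹)_{ji}(ℂĀ)_{i3}. Then the minimum of b ↦ ℂ(Ā + b⊙e₃)·(Ā + b⊙e₃) over ℝ³ is attained at b = b^min, and the minimizing stress is planar: (ℂ(Ā + b^min⊙e₃))_{i3} = 0 for i = 1, 2, 3. -/

import Mathlib

open Matrix
open scoped BigOperators

noncomputable section

/-- The space of real 3×3 matrices; symmetric ones form `Sym₃`. -/
abbrev M3 : Type := Matrix (Fin 3) (Fin 3) ℝ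

/-- The Frobenius pairing `A·B := tr (A*B)`. -/
def dot3 (A B : M3) : ℝ := (A * B).trace

/-- The standard basis vector `e i` of `ℝ³`. -/
def bv (i : Fin 3) : Fin 3 → ℝ := Pi.single i 1

/-- The symmetrized tensor product `a ⊙ b := (1/2)(a⊗b + b⊗a)`. -/
def symOd (a b : Fin 3 → ℝ) : M3 := Matrix.of fun i j => (a i * b j + b i * a j) / 2

/-- `b ⊙ e₃`. -/
def od3 (b : Fin 3 → ℝ) : M3 := symOd b (bv 2)

/-- Components `ℂ_{ijkl} := ℂ(e_k⊙e_l)·(e_i⊙e_j)` of the elasticity tensor. -/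
def Ccomp (C : M3 →ₗ[ℝ] M3) (i j k l : Fin 3) : ℝ :=
  dot3 (C (symOd (bv k) (bv l))) (symOd (bv i) (bv j))

/-- The matrix `𝕔` with `𝕔_{ij} := ℂ_{i3j3}`. -/
def cmat (C : M3 →ₗ[ℝ] M3) : M3 := Matrix.of fun i j => Ccomp C i 2 j 2

/-- `A` has vanishing third row and column (identification of `Sym₂` inside `Sym₃`). -/
def planar (A : M3) : Prop := ∀ i : Fin 3, A i 2 = 0 ∧ A 2 i = 0

/-- The minimizer `b^min_j := −(𝕔⁻¹)_{ji}(ℂĀ)_{i3}`. -/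
def bmin (C : M3 →ₗ[ℝ] M3) (A : M3) : Fin 3 → ℝ :=
  fun j => -∑ i : Fin 3, (cmat C)⁻¹ j i * (C A) i 2

/-!
Write `Q(A) := ℂA·A` and `X := Ā + b^min⊙e₃`. Pairing a symmetric matrix `M` with `b⊙e₃` reads off
its third column, `M·(b⊙e₃) = bᵢ M_{i3}`, so `(ℂ(b⊙e₃))_{i3} = 𝕔_{ij} b_j` and `Q(b⊙e₃) = 𝕔b·b`.
Coercivity makes `𝕔` positive definite, hence invertible, and `b^min` is chosen so that the third
column of `ℂX` vanishes. Then `ℂX·(h⊙e₃) = 0` for every `h`, and self-adjointness gives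
`Q(X + h⊙e₃) = Q(X) + Q(h⊙e₃) ≥ Q(X)`.
-/

lemma dot3_add_left (A B D : M3) : dot3 (A + B) D = dot3 A D + dot3 B D := by
  simp [dot3, Matrix.add_mul]

lemma dot3_add_right (A B D : M3) : dot3 D (A + B) = dot3 D A + dot3 D B := by
  simp [dot3, Matrix.mul_add]

lemma od3_isSymm (b : Fin 3 → ℝ) : (od3 b).IsSymm := by
  ext i j
  simp only [od3, symOd, transpose_apply, of_apply]
  ring

lemma od3_add (x y : Fin 3 → ℝ) : od3 (x + y) = od3 x + od3 y := by
  ext i j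
  simp only [od3, symOd, Pi.add_apply, Matrix.add_apply, of_apply]
  ring

lemma od3_eq_sum_smul (b : Fin 3 → ℝ) : od3 b = ∑ j, b j • od3 (bv j) := by
  ext i k
  fin_cases i <;> fin_cases k <;>
    simp [od3, symOd, bv, Fin.sum_univ_three, Pi.single_apply, Matrix.sum_apply] <;> ring

lemma dot3_od3 {M : M3} (hM : M.IsSymm) (b : Fin 3 → ℝ) :
    dot3 M (od3 b) = ∑ i, b i * M i 2 := by
  simp only [dot3, trace, diag, mul_apply, Fin.sum_univ_three, od3, symOd, bv, of_apply,
    Pi.single_apply]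
  rw [hM.apply 0 2, hM.apply 1 2]
  simp only [Fin.reduceEq, if_true, if_false]
  ring

lemma dot3_od3_self (x : Fin 3 → ℝ) :
    dot3 (od3 x) (od3 x) = x 0 ^ 2 / 2 + x 1 ^ 2 / 2 + x 2 ^ 2 := by
  simp [dot3, trace, mul_apply, Fin.sum_univ_three, od3, symOd, bv, Pi.single_apply]
  ring

lemma dot3_od3_self_pos {x : Fin 3 → ℝ} (hx : x ≠ 0) : 0 < dot3 (od3 x) (od3 x) := by
  rw [dot3_od3_self]
  obtain ⟨i, hi⟩ := Function.ne_iff.mp hx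
  fin_cases i <;> simp only [Pi.zero_apply] at hi <;> positivity

section ElasticityTensor

variable {C : M3 →ₗ[ℝ] M3}

lemma cmat_apply (hCsymm : ∀ A : M3, A.IsSymm → (C A).IsSymm) (i j : Fin 3) :
    cmat C i j = C (od3 (bv j)) i 2 := by
  change dot3 (C (od3 (bv j))) (od3 (bv i)) = _
  rw [dot3_od3 (hCsymm _ (od3_isSymm _))]
  fin_cases i <;> simp [bv, Pi.single_apply]

lemma map_od3_apply_two (hCsymm : ∀ A : M3, A.IsSymm → (C A).IsSymm) (b : Fin 3 → ℝ)
    (i : Fin 3) : C (od3 b) i 2 = (cmat C *ᵥ b) i := by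
  rw [od3_eq_sum_smul, map_sum]
  simp only [map_smul, Matrix.sum_apply, Matrix.smul_apply, smul_eq_mul, mulVec, dotProduct,
    cmat_apply hCsymm, mul_comm]

lemma dot3_map_od3_self (hCsymm : ∀ A : M3, A.IsSymm → (C A).IsSymm) (x : Fin 3 → ℝ) :
    dot3 (C (od3 x)) (od3 x) = x ⬝ᵥ (cmat C *ᵥ x) := by
  simp only [dot3_od3 (hCsymm _ (od3_isSymm x)), map_od3_apply_two hCsymm, dotProduct]

lemma cmat_isSymm (hCsa : ∀ A B : M3, A.IsSymm → B.IsSymm → dot3 (C A) B = dot3 A (C B)) :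
    (cmat C).IsSymm := by
  ext i j
  change dot3 (C (od3 (bv i))) (od3 (bv j)) = dot3 (C (od3 (bv j))) (od3 (bv i))
  rw [hCsa _ _ (od3_isSymm _) (od3_isSymm _), dot3, dot3, trace_mul_comm]

lemma cmat_posDef {c : ℝ} (hc : 0 < c) (hCsymm : ∀ A : M3, A.IsSymm → (C A).IsSymm)
    (hCsa : ∀ A B : M3, A.IsSymm → B.IsSymm → dot3 (C A) B = dot3 A (C B))
    (hCcoer : ∀ A : M3, A.IsSymm → c * dot3 A A ≤ dot3 (C A) A) :
    (cmat C).PosDef := by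
  refine posDef_iff_dotProduct_mulVec.mpr ⟨cmat_isSymm hCsa, fun x hx => ?_⟩
  rw [star_trivial, ← dot3_map_od3_self hCsymm]
  exact (mul_pos hc (dot3_od3_self_pos hx)).trans_le (hCcoer _ (od3_isSymm x))

lemma map_add_od3_bmin_apply_two (hCsymm : ∀ A : M3, A.IsSymm → (C A).IsSymm)
    (hdet : IsUnit (cmat C).det) (A : M3) (i : Fin 3) :
    C (A + od3 (bmin C A)) i 2 = 0 := by
  have hbmin : bmin C A = -((cmat C)⁻¹ *ᵥ fun k => C A k 2) := by
    ext j
    simp [bmin, mulVec, dotProduct]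
  rw [map_add, Matrix.add_apply, map_od3_apply_two hCsymm, hbmin, mulVec_neg, mulVec_mulVec,
    mul_nonsing_inv _ hdet, one_mulVec, Pi.neg_apply, add_neg_cancel]

lemma dot3_map_self_le_of_orthogonal
    (hCsa : ∀ A B : M3, A.IsSymm → B.IsSymm → dot3 (C A) B = dot3 A (C B))
    {X H : M3} (hX : X.IsSymm) (hH : H.IsSymm) (horth : dot3 (C X) H = 0)
    (hH_nonneg : 0 ≤ dot3 (C H) H) :
    dot3 (C X) X ≤ dot3 (C (X + H)) (X + H) := by
  have horth' : dot3 (C H) X = 0 := by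
    rw [hCsa _ _ hH hX, dot3, trace_mul_comm, ← dot3, horth]
  rw [map_add, dot3_add_left, dot3_add_right, dot3_add_right, horth, horth']
  linarith

end ElasticityTensor

theorem bmin_isMinimizer_and_planar_stress_general
    (C : M3 →ₗ[ℝ] M3) (c : ℝ) (hc : 0 < c)
    (hCsymm : ∀ A : M3, A.IsSymm → (C A).IsSymm)
    (hCsa : ∀ A B : M3, A.IsSymm → B.IsSymm → dot3 (C A) B = dot3 A (C B))
    (hCcoer : ∀ A : M3, A.IsSymm → c * dot3 A A ≤ dot3 (C A) A)
    (Ab : M3) (hAs : Ab.IsSymm) :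
    (∀ b : Fin 3 → ℝ,
        dot3 (C (Ab + od3 (bmin C Ab))) (Ab + od3 (bmin C Ab))
          ≤ dot3 (C (Ab + od3 b)) (Ab + od3 b))
    ∧ (∀ i : Fin 3, (C (Ab + od3 (bmin C Ab))) i 2 = 0) := by
  have hpos := cmat_posDef hc hCsymm hCsa hCcoer
  have hplanar := map_add_od3_bmin_apply_two hCsymm hpos.det_pos.ne'.isUnit Ab
  refine ⟨fun b => ?_, hplanar⟩
  set X := Ab + od3 (bmin C Ab)
  have hX : X.IsSymm := hAs.add (od3_isSymm _)
  have hsplit : Ab + od3 b = X + od3 (b - bmin C Ab) := by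
    rw [add_assoc, ← od3_add, add_sub_cancel]
  rw [hsplit]
  refine dot3_map_self_le_of_orthogonal hCsa hX (od3_isSymm _) ?_ ?_
  · simp [dot3_od3 (hCsymm _ hX), hplanar]
  · rw [dot3_map_od3_self hCsymm]
    exact hpos.posSemidef.dotProduct_mulVec_nonneg _

/-- Let `ℂ` be an elasticity tensor, coercive with constant `c > 0`, and
`Ā ∈ Sym₂`.  Then the minimum of `b ↦ ℂ(Ā + b⊙e₃)·(Ā + b⊙e₃)` over `ℝ³` is attained at
`b = b^min` with `b^min_j := −(𝕔⁻¹)_{ji}(ℂĀ)_{i3}`, and the minimizing stress is planar: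
`(ℂ(Ā + b^min⊙e₃))_{i3} = 0` for `i = 1,2,3`. -/
theorem bmin_isMinimizer_and_planar_stress
    (C : M3 →ₗ[ℝ] M3) (c : ℝ) (hc : 0 < c)
    (hCsymm : ∀ A : M3, A.IsSymm → (C A).IsSymm)
    (hCsa : ∀ A B : M3, A.IsSymm → B.IsSymm → dot3 (C A) B = dot3 A (C B))
    (hCcoer : ∀ A : M3, A.IsSymm → c * dot3 A A ≤ dot3 (C A) A)
    (Ab : M3) (hAs : Ab.IsSymm) (hAp : planar Ab) :
    (∀ b : Fin 3 → ℝ,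
        dot3 (C (Ab + od3 (bmin C Ab))) (Ab + od3 (bmin C Ab))
          ≤ dot3 (C (Ab + od3 b)) (Ab + od3 b))
    ∧ (∀ i : Fin 3, (C (Ab + od3 (bmin C Ab))) i 2 = 0) :=
  bmin_isMinimizer_and_planar_stress_general C c hc hCsymm hCsa hCcoer Ab hAs
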